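/- arXiv:1504.00847 — 2 statements merged into one kernel-verified Lean document; each statement's English description precedes it below -/
import Mathlib

section
/- Let z ∈ ℂ₊ and let (φ, φ̃) be an admissible solution at z. Set ζ(f) = σ²(𝛄(−·)⋆φ)(f) and ζ̃(f) = σ²(𝛄⋆φ̃)(f), write S(f) = S(f,z), S̃(f) = S̃(f,z), and define K₁₁(f,u) = σ²𝛄(u−f)·T⁻¹ tr[S(f)(𝐀𝐀*)(f)S(f)*]/|1+ζ(f)|², K₁₂(f,u) = σ²𝛄(f−u)·T⁻¹ tr[S(f)S(f)*], K₂₁(f,u) = σ²𝛄(u−f)·|z|² T⁻¹ tr[S̃(f)S̃(f)*], K₂₂(f,u) = σ²𝛄(f−u)·T⁻¹ tr[S̃(f)(𝐀*𝐀)(f)S̃(f)*]/|1+ζ̃(f)|², F₁(f) = T⁻¹ tr[S(f)S(f)*], and F₂(f) = T⁻¹ tr[S̃(f)(𝐀*𝐀)(f)S̃(f)*]/|1+ζ̃(f)|². Then for every f ∈ [0,1]: Im φ(f) = ∫₀¹ ( K₁₁(f,u) Im φ(u) + K₁₂(f,u) Im(z φ̃(u)) ) du + (Im z) F₁(f), and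 Im(z φ̃(f)) = ∫₀¹ ( K₂₁(f,u) Im φ(u) + K₂₂(f,u) Im(z φ̃(u)) ) du + (Im z) F₂(f). -/
open MeasureTheory Matrix

noncomputable section

/-- Spectral norm (l2 operator norm) of a complex matrix. -/
def specNorm {m n : Type*} [Fintype m] [Fintype n] [DecidableEq n]
    (M : Matrix m n ℂ) : ℝ :=
  ‖(Matrix.toEuclideanLin.trans LinearMap.toContinuousLinearMap) M‖

/-- The Fourier transform `𝐀(f) = ∑_{k=-L}^{L} e^{2πikf} A(k)`. -/
def fA (N T : ℕ) (L : ℕ) (A : ℤ → Matrix (Fin N) (Fin T) ℂ) (f : ℝ) :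
    Matrix (Fin N) (Fin T) ℂ :=
  ∑ k ∈ Finset.Icc (-(L:ℤ)) (L:ℤ),
    Complex.exp (2 * Real.pi * Complex.I * (k : ℂ) * (f : ℂ)) • A k

/-- `(𝛄 ⋆ ψ)(f) = ∫₀¹ 𝛄(f-u) ψ(u) du`. -/
def convP (bγ : ℝ → ℝ) (ψ : ℝ → ℂ) (f : ℝ) : ℂ :=
  ∫ u in (0:ℝ)..1, (bγ (f - u) : ℂ) * ψ u

/-- `(𝛄(-·) ⋆ ψ)(f) = ∫₀¹ 𝛄(u-f) ψ(u) du`. -/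
def convM (bγ : ℝ → ℝ) (ψ : ℝ → ℂ) (f : ℝ) : ℂ :=
  ∫ u in (0:ℝ)..1, (bγ (u - f) : ℂ) * ψ u

/-- The matrix `S(f,z)`. -/
def Smat (N T L : ℕ) (σ2 : ℝ) (bγ : ℝ → ℝ) (A : ℤ → Matrix (Fin N) (Fin T) ℂ)
    (φ φt : ℝ → ℂ) (z : ℂ) (f : ℝ) : Matrix (Fin N) (Fin N) ℂ :=
  ((-z * (1 + (σ2 : ℂ) * convP bγ φt f)) • (1 : Matrix (Fin N) (Fin N) ℂ)
    + (1 + (σ2 : ℂ) * convM bγ φ f)⁻¹ • (fA N T L A f * (fA N T L A f)ᴴ))⁻¹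

/-- The matrix `S̃(f,z)`. -/
def StMat (N T L : ℕ) (σ2 : ℝ) (bγ : ℝ → ℝ) (A : ℤ → Matrix (Fin N) (Fin T) ℂ)
    (φ φt : ℝ → ℂ) (z : ℂ) (f : ℝ) : Matrix (Fin T) (Fin T) ℂ :=
  ((-z * (1 + (σ2 : ℂ) * convM bγ φ f)) • (1 : Matrix (Fin T) (Fin T) ℂ)
    + (1 + (σ2 : ℂ) * convP bγ φt f)⁻¹ • ((fA N T L A f)ᴴ * fA N T L A f))⁻¹

/-- A pair `(φ, φ̃)` of integrable functions is an admissible solution at `z`. -/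
def IsAdmissible (N T L : ℕ) (σ2 : ℝ) (bγ : ℝ → ℝ)
    (A : ℤ → Matrix (Fin N) (Fin T) ℂ) (z : ℂ) (φ φt : ℝ → ℂ) : Prop :=
  IntegrableOn φ (Set.Icc (0:ℝ) 1) ∧ IntegrableOn φt (Set.Icc (0:ℝ) 1) ∧
  (∀ f ∈ Set.Icc (0:ℝ) 1,
    0 ≤ (φ f).im ∧ 0 ≤ (φt f).im ∧ 0 ≤ (z * φ f).im ∧ 0 ≤ (z * φt f).im) ∧
  (∀ f ∈ Set.Icc (0:ℝ) 1,
    φ f = (T : ℂ)⁻¹ * (Smat N T L σ2 bγ A φ φt z f).trace ∧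
    φt f = (T : ℂ)⁻¹ * (StMat N T L σ2 bγ A φ φt z f).trace)

section Kernels

variable (N T L : ℕ) (σ2 : ℝ) (bγ : ℝ → ℝ) (A : ℤ → Matrix (Fin N) (Fin T) ℂ)
  (φ φt : ℝ → ℂ) (z : ℂ)

/-- `ζ(f) = σ²(𝛄(-·)⋆φ)(f)`. -/
def zeta (f : ℝ) : ℂ := (σ2 : ℂ) * convM bγ φ f

/-- `ζ̃(f) = σ²(𝛄⋆φ̃)(f)`. -/
def zetat (f : ℝ) : ℂ := (σ2 : ℂ) * convP bγ φt f

def K11 (f u : ℝ) : ℝ :=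
  σ2 * bγ (u - f) *
    ((T : ℝ)⁻¹ * ((Smat N T L σ2 bγ A φ φt z f * (fA N T L A f * (fA N T L A f)ᴴ)
        * (Smat N T L σ2 bγ A φ φt z f)ᴴ).trace.re)
      / ‖1 + zeta σ2 bγ φ f‖ ^ 2)

def K12 (f u : ℝ) : ℝ :=
  σ2 * bγ (f - u) *
    ((T : ℝ)⁻¹ * ((Smat N T L σ2 bγ A φ φt z f
        * (Smat N T L σ2 bγ A φ φt z f)ᴴ).trace.re))

def K21 (f u : ℝ) : ℝ :=
  σ2 * bγ (u - f) * (‖z‖ ^ 2 *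
    ((T : ℝ)⁻¹ * ((StMat N T L σ2 bγ A φ φt z f
        * (StMat N T L σ2 bγ A φ φt z f)ᴴ).trace.re)))

def K22 (f u : ℝ) : ℝ :=
  σ2 * bγ (f - u) *
    ((T : ℝ)⁻¹ * ((StMat N T L σ2 bγ A φ φt z f * ((fA N T L A f)ᴴ * fA N T L A f)
        * (StMat N T L σ2 bγ A φ φt z f)ᴴ).trace.re)
      / ‖1 + zetat σ2 bγ φt f‖ ^ 2)

def F1 (f : ℝ) : ℝ :=
  (T : ℝ)⁻¹ * ((Smat N T L σ2 bγ A φ φt z f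
      * (Smat N T L σ2 bγ A φ φt z f)ᴴ).trace.re)

def F2 (f : ℝ) : ℝ :=
  (T : ℝ)⁻¹ * ((StMat N T L σ2 bγ A φ φt z f * ((fA N T L A f)ᴴ * fA N T L A f)
      * (StMat N T L σ2 bγ A φ φt z f)ᴴ).trace.re)
    / ‖1 + zetat σ2 bγ φt f‖ ^ 2

end Kernels



/-!
Write `S = M⁻¹` with `M = a • 1 + b • B`, `B ⪰ 0`. From `S * M = 1` we get `S M Sᴴ = Sᴴ`, so
`conj (tr S) = a · tr (S Sᴴ) + b · tr (S B Sᴴ)` with both traces real; hence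
`Im (e · tr S) = Im (e · conj a) · tr (S Sᴴ) + Im (e · conj b) · tr (S B Sᴴ)`.
For `S(f)` and `S̃(f)` the coefficients `a = -z (1 + ζ̃)`, `b = (1 + ζ)⁻¹` (and symmetrically) have
imaginary parts given by `Im z` and the convolutions of `𝛄` with `Im φ` and `Im (z φ̃)`; this is the
kernel form of the statement. The sign conditions on `(φ, φ̃)` give `Im a < 0` and `Im b ≤ 0`,
which is what makes `M` invertible.
-/

open Set Complex ComplexConjugate
open scoped ComplexOrder

namespace Matrix

lemma PosSemidef.im_trace_eq_zero {n : Type*} [Fintype n] {B : Matrix n n ℂ}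
    (hB : B.PosSemidef) : B.trace.im = 0 :=
  (Complex.nonneg_iff.mp hB.trace_nonneg).2.symm

variable {n : Type*} [Fintype n] [DecidableEq n]

lemma isUnit_det_smul_one_add_smul {a b : ℂ} (ha : a.im < 0) (hb : b.im ≤ 0)
    {B : Matrix n n ℂ} (hB : B.PosSemidef) : IsUnit (a • (1 : Matrix n n ℂ) + b • B).det := by
  rw [isUnit_iff_ne_zero]
  intro hdet
  obtain ⟨v, hv, hMv⟩ := exists_mulVec_eq_zero_iff.mpr hdet
  have hform : a * (star v ⬝ᵥ v) + b * (star v ⬝ᵥ (B *ᵥ v)) = 0 := by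
    simpa [add_mulVec, smul_mulVec, dotProduct_add, dotProduct_smul] using
      congrArg (star v ⬝ᵥ ·) hMv
  obtain ⟨hp_re, hp_im⟩ := Complex.lt_def.mp (dotProduct_star_self_pos_iff.mpr hv)
  obtain ⟨hq_re, hq_im⟩ := Complex.le_def.mp (hB.dotProduct_mulVec_nonneg v)
  have him := congrArg Complex.im hform
  simp only [add_im, mul_im, ← hp_im, ← hq_im, zero_re, zero_im] at him hp_re hq_re
  nlinarith [mul_pos (neg_pos.mpr ha) hp_re, mul_nonneg (neg_nonneg.mpr hb) hq_re]

lemma star_trace_eq_of_mul_eq_one {a b : ℂ} {S B : Matrix n n ℂ}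
    (hS : S * (a • 1 + b • B) = 1) :
    star S.trace = a * (S * Sᴴ).trace + b * (S * B * Sᴴ).trace := by
  have hSMS : S * (a • 1 + b • B) * Sᴴ = Sᴴ := by rw [hS, Matrix.one_mul]
  rw [← trace_conjTranspose]
  conv_lhs => rw [← hSMS]
  rw [Matrix.mul_add, Matrix.add_mul, Matrix.mul_smul, Matrix.mul_smul, Matrix.smul_mul,
    Matrix.smul_mul, Matrix.mul_one, trace_add, trace_smul, trace_smul, smul_eq_mul, smul_eq_mul]

lemma im_mul_trace_eq_of_mul_eq_one (e : ℂ) {a b : ℂ} {S B : Matrix n n ℂ} (hB : B.PosSemidef)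
    (hS : S * (a • 1 + b • B) = 1) :
    (e * S.trace).im
      = (e * conj a).im * (S * Sᴴ).trace.re + (e * conj b).im * (S * B * Sᴴ).trace.re := by
  have hreal : ∀ {C : Matrix n n ℂ}, C.PosSemidef → C.trace = (C.trace.re : ℂ) :=
    fun hC => Complex.ext rfl (by simp [hC.im_trace_eq_zero])
  have htr : S.trace = conj a * (S * Sᴴ).trace.re + conj b * (S * B * Sᴴ).trace.re := by
    rw [← star_star S.trace, star_trace_eq_of_mul_eq_one hS,
      hreal (posSemidef_self_mul_conjTranspose S), hreal (hB.mul_mul_conjTranspose_same S)]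
    simp
  rw [htr]
  simp only [mul_add, ← mul_assoc, add_im, im_mul_ofReal]

end Matrix

lemma Complex.im_one_add_ofReal_mul (σ : ℝ) (p : ℂ) : (1 + σ * p).im = σ * p.im := by
  simp

lemma Complex.im_mul_one_add_ofReal_mul (z p : ℂ) (σ : ℝ) :
    (z * (1 + σ * p)).im = z.im + σ * (z * p).im := by
  rw [mul_add, mul_one, mul_left_comm, add_im, im_ofReal_mul]

lemma Complex.im_mul_conj_inv (e w : ℂ) : (e * conj w⁻¹).im = (e * w).im / ‖w‖ ^ 2 := by
  rw [map_inv₀, inv_def, conj_conj, normSq_conj, ← mul_assoc, im_mul_ofReal, normSq_eq_norm_sq,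
    div_eq_mul_inv]

lemma Complex.im_mul_conj_neg_mul (z w : ℂ) : (z * conj (-z * w)).im = ‖z‖ ^ 2 * w.im := by
  rw [map_mul, map_neg, ← mul_assoc, mul_neg, mul_conj, neg_mul, neg_im, im_ofReal_mul, conj_im,
    normSq_eq_norm_sq, mul_neg, neg_neg]

lemma Complex.im_inv_natCast_mul (T : ℕ) (x : ℂ) : ((T : ℂ)⁻¹ * x).im = (T : ℝ)⁻¹ * x.im := by
  rw [← ofReal_natCast, ← ofReal_inv, im_ofReal_mul]

section Resolvent

open Matrix

variable {n : Type*} [Fintype n] [DecidableEq n]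

lemma im_mul_trace_resolvent (e : ℂ) {z p q : ℂ} {σ : ℝ} (hσ : 0 ≤ σ) (hz : 0 < z.im)
    (hp : 0 ≤ (z * p).im) (hq : 0 ≤ q.im) {B S : Matrix n n ℂ} (hB : B.PosSemidef)
    (hS : S = ((-z * (1 + σ * p)) • (1 : Matrix n n ℂ) + (1 + σ * q)⁻¹ • B)⁻¹) :
    (e * S.trace).im = (e * conj (-z * (1 + σ * p))).im * (S * Sᴴ).trace.re
      + (e * conj (1 + σ * q)⁻¹).im * (S * B * Sᴴ).trace.re := by
  have ha : (-z * (1 + σ * p)).im < 0 := by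
    rw [neg_mul, neg_im, im_mul_one_add_ofReal_mul]
    nlinarith [mul_nonneg hσ hp]
  have hb : ((1 + σ * q)⁻¹).im ≤ 0 := by
    rw [inv_im, im_one_add_ofReal_mul, neg_div]
    exact neg_nonpos.mpr (div_nonneg (mul_nonneg hσ hq) (normSq_nonneg _))
  subst hS
  exact im_mul_trace_eq_of_mul_eq_one e hB
    (nonsing_inv_mul _ (isUnit_det_smul_one_add_smul ha hb hB))

end Resolvent

section Convolution

variable {bγ : ℝ → ℝ}

lemma intervalIntegrable_mul_of_continuous {R : Type*} [NormedRing R] {g ψ : ℝ → R}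
    (hg : Continuous g) (hψ : IntegrableOn ψ (Icc 0 1)) :
    IntervalIntegrable (fun u => g u * ψ u) volume 0 1 :=
  (intervalIntegrable_iff_integrableOn_Icc_of_le zero_le_one).mpr
    (hψ.continuousOn_mul hg.continuousOn isCompact_Icc)

lemma im_intervalIntegral_ofReal_mul {k : ℝ → ℝ} (hk : Continuous k) {ψ : ℝ → ℂ}
    (hψ : IntegrableOn ψ (Icc 0 1)) :
    (∫ u in (0:ℝ)..1, (k u : ℂ) * ψ u).im = ∫ u in (0:ℝ)..1, k u * (ψ u).im := by
  have hint : IntervalIntegrable (fun u => (k u : ℂ) * ψ u) volume 0 1 :=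
    intervalIntegrable_mul_of_continuous (continuous_ofReal.comp hk) hψ
  simpa using (ContinuousLinearMap.intervalIntegral_comp_comm imCLM hint).symm

lemma im_convM (hbγ : Continuous bγ) {ψ : ℝ → ℂ} (hψ : IntegrableOn ψ (Icc 0 1)) (f : ℝ) :
    (convM bγ ψ f).im = ∫ u in (0:ℝ)..1, bγ (u - f) * (ψ u).im :=
  im_intervalIntegral_ofReal_mul (hbγ.comp (continuous_sub_right f)) hψ

lemma im_convP (hbγ : Continuous bγ) {ψ : ℝ → ℂ} (hψ : IntegrableOn ψ (Icc 0 1)) (f : ℝ) :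
    (convP bγ ψ f).im = ∫ u in (0:ℝ)..1, bγ (f - u) * (ψ u).im :=
  im_intervalIntegral_ofReal_mul (hbγ.comp (continuous_sub_left f)) hψ

lemma im_convM_nonneg (hbγ : Continuous bγ) (hbγnn : ∀ x, 0 ≤ bγ x) {ψ : ℝ → ℂ}
    (hψ : IntegrableOn ψ (Icc 0 1)) (hψim : ∀ u ∈ Icc (0:ℝ) 1, 0 ≤ (ψ u).im) (f : ℝ) :
    0 ≤ (convM bγ ψ f).im := by
  rw [im_convM hbγ hψ]
  exact intervalIntegral.integral_nonneg zero_le_one fun u hu => mul_nonneg (hbγnn _) (hψim u hu)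

lemma im_convP_nonneg (hbγ : Continuous bγ) (hbγnn : ∀ x, 0 ≤ bγ x) {ψ : ℝ → ℂ}
    (hψ : IntegrableOn ψ (Icc 0 1)) (hψim : ∀ u ∈ Icc (0:ℝ) 1, 0 ≤ (ψ u).im) (f : ℝ) :
    0 ≤ (convP bγ ψ f).im := by
  rw [im_convP hbγ hψ]
  exact intervalIntegral.integral_nonneg zero_le_one fun u hu => mul_nonneg (hbγnn _) (hψim u hu)

lemma convM_const_mul (c : ℂ) (ψ : ℝ → ℂ) (f : ℝ) :
    convM bγ (fun u => c * ψ u) f = c * convM bγ ψ f := by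
  rw [convM, convM, ← intervalIntegral.integral_const_mul]
  simp only [mul_left_comm]

lemma convP_const_mul (c : ℂ) (ψ : ℝ → ℂ) (f : ℝ) :
    convP bγ (fun u => c * ψ u) f = c * convP bγ ψ f := by
  rw [convP, convP, ← intervalIntegral.integral_const_mul]
  simp only [mul_left_comm]

lemma integral_factored_kernels (K₁ K₂ : ℝ → ℝ) {σ c₁ c₂ f : ℝ} (hbγ : Continuous bγ)
    {ψ₁ ψ₂ : ℝ → ℂ} (hψ₁ : IntegrableOn ψ₁ (Icc 0 1)) (hψ₂ : IntegrableOn ψ₂ (Icc 0 1))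
    (hK₁ : ∀ u, K₁ u = σ * bγ (u - f) * c₁) (hK₂ : ∀ u, K₂ u = σ * bγ (f - u) * c₂) :
    ∫ u in (0:ℝ)..1, (K₁ u * (ψ₁ u).im + K₂ u * (ψ₂ u).im)
      = σ * c₁ * (convM bγ ψ₁ f).im + σ * c₂ * (convP bγ ψ₂ f).im := by
  have hint₁ : IntervalIntegrable (fun u => bγ (u - f) * (ψ₁ u).im) volume 0 1 :=
    intervalIntegrable_mul_of_continuous (hbγ.comp (continuous_sub_right f)) hψ₁.im
  have hint₂ : IntervalIntegrable (fun u => bγ (f - u) * (ψ₂ u).im) volume 0 1 :=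
    intervalIntegrable_mul_of_continuous (hbγ.comp (continuous_sub_left f)) hψ₂.im
  rw [im_convM hbγ hψ₁, im_convP hbγ hψ₂, ← intervalIntegral.integral_const_mul,
    ← intervalIntegral.integral_const_mul,
    ← intervalIntegral.integral_add (hint₁.const_mul _) (hint₂.const_mul _)]
  simp only [hK₁, hK₂]
  congr 1 with u
  ring

end Convolution


section Traces

open Matrix

variable {N T L : ℕ} {σ2 : ℝ} {bγ : ℝ → ℝ} {A : ℤ → Matrix (Fin N) (Fin T) ℂ} {φ φt : ℝ → ℂ}
  {z : ℂ} {f : ℝ}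

lemma im_trace_Smat (hσ : 0 ≤ σ2) (hz : 0 < z.im) (hφ : 0 ≤ (convM bγ φ f).im)
    (hzφt : 0 ≤ (z * convP bγ φt f).im) :
    (Smat N T L σ2 bγ A φ φt z f).trace.im
      = (z.im + σ2 * (z * convP bγ φt f).im)
          * (Smat N T L σ2 bγ A φ φt z f * (Smat N T L σ2 bγ A φ φt z f)ᴴ).trace.re
        + σ2 * (convM bγ φ f).im / ‖1 + zeta σ2 bγ φ f‖ ^ 2
          * (Smat N T L σ2 bγ A φ φt z f * (fA N T L A f * (fA N T L A f)ᴴ)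
              * (Smat N T L σ2 bγ A φ φt z f)ᴴ).trace.re := by
  have h := im_mul_trace_resolvent 1 hσ hz hzφt hφ
    (posSemidef_self_mul_conjTranspose (fA N T L A f)) (S := Smat N T L σ2 bγ A φ φt z f) rfl
  rw [im_mul_conj_inv] at h
  simp only [one_mul] at h
  rw [h, conj_im, neg_mul z, neg_im, neg_neg, im_mul_one_add_ofReal_mul, im_one_add_ofReal_mul, zeta]

lemma im_mul_trace_StMat (hσ : 0 ≤ σ2) (hz : 0 < z.im) (hzφ : 0 ≤ (z * convM bγ φ f).im)
    (hφt : 0 ≤ (convP bγ φt f).im) :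
    (z * (StMat N T L σ2 bγ A φ φt z f).trace).im
      = ‖z‖ ^ 2 * (σ2 * (convM bγ φ f).im)
          * (StMat N T L σ2 bγ A φ φt z f * (StMat N T L σ2 bγ A φ φt z f)ᴴ).trace.re
        + (z.im + σ2 * (z * convP bγ φt f).im) / ‖1 + zetat σ2 bγ φt f‖ ^ 2
          * (StMat N T L σ2 bγ A φ φt z f * ((fA N T L A f)ᴴ * fA N T L A f)
              * (StMat N T L σ2 bγ A φ φt z f)ᴴ).trace.re := by
  have h := im_mul_trace_resolvent z hσ hz hzφ hφt
    (posSemidef_conjTranspose_mul_self (fA N T L A f)) (S := StMat N T L σ2 bγ A φ φt z f) rfl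
  rw [h, im_mul_conj_neg_mul, im_mul_conj_inv, im_one_add_ofReal_mul, im_mul_one_add_ofReal_mul,
    zetat]

end Traces

theorem imaginary_parts_system_general
    (N T L : ℕ)
    (σ2 : ℝ) (hσ : 0 < σ2)
    (bγ : ℝ → ℝ)
    (hbγc : Continuous bγ) (hbγnn : ∀ f, 0 ≤ bγ f)
    (A : ℤ → Matrix (Fin N) (Fin T) ℂ)
    (z : ℂ) (hz : 0 < z.im) (φ φt : ℝ → ℂ)
    (hadm : IsAdmissible N T L σ2 bγ A z φ φt) :
    ∀ f ∈ Set.Icc (0:ℝ) 1,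
      (φ f).im =
        (∫ u in (0:ℝ)..1,
          (K11 N T L σ2 bγ A φ φt z f u * (φ u).im
            + K12 N T L σ2 bγ A φ φt z f u * (z * φt u).im))
        + z.im * F1 N T L σ2 bγ A φ φt z f ∧
      (z * φt f).im =
        (∫ u in (0:ℝ)..1,
          (K21 N T L σ2 bγ A φ φt z f u * (φ u).im
            + K22 N T L σ2 bγ A φ φt z f u * (z * φt u).im))
        + z.im * F2 N T L σ2 bγ A φ φt z f := by
  obtain ⟨hφ, hφt, him, hfix⟩ := hadm
  have hzφ : IntegrableOn (fun u => z * φ u) (Icc 0 1) := hφ.const_mul z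
  have hzφt : IntegrableOn (fun u => z * φt u) (Icc 0 1) := hφt.const_mul z
  intro f hf
  have him_φ := im_convM_nonneg hbγc hbγnn hφ (fun u hu => (him u hu).1) f
  have him_φt := im_convP_nonneg hbγc hbγnn hφt (fun u hu => (him u hu).2.1) f
  have him_zφ := im_convM_nonneg hbγc hbγnn hzφ (fun u hu => (him u hu).2.2.1) f
  have him_zφt := im_convP_nonneg hbγc hbγnn hzφt (fun u hu => (him u hu).2.2.2) f
  rw [convM_const_mul] at him_zφ
  rw [convP_const_mul] at him_zφt
  constructor
  · rw [(hfix f hf).1, im_inv_natCast_mul, im_trace_Smat hσ.le hz him_φ him_zφt,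
      integral_factored_kernels (K11 N T L σ2 bγ A φ φt z f) (K12 N T L σ2 bγ A φ φt z f)
        hbγc hφ hzφt (fun _ => rfl) (fun _ => rfl), convP_const_mul, F1]
    ring
  · rw [(hfix f hf).2, mul_left_comm z, im_inv_natCast_mul,
      im_mul_trace_StMat hσ.le hz him_zφ him_φt,
      integral_factored_kernels (K21 N T L σ2 bγ A φ φt z f) (K22 N T L σ2 bγ A φ φt z f)
        hbγc hφ hzφt (fun _ => rfl) (fun _ => rfl), convP_const_mul, F2]
    ring

theorem imaginary_parts_system
    (N T L : ℕ) (hN : 0 < N) (hT : 0 < T) (hL : 0 < L)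
    (σ2 : ℝ) (hσ : 0 < σ2)
    (γ : ℤ → ℝ) (hγsum : Summable fun k : ℤ => |γ k|) (hγ0 : γ 0 = 1)
    (bγ : ℝ → ℝ)
    (hbγ : ∀ f : ℝ, (bγ f : ℂ)
      = ∑' k : ℤ, (γ k : ℂ) * Complex.exp (2 * Real.pi * Complex.I * (k : ℂ) * (f : ℂ)))
    (hbγc : Continuous bγ) (hbγnn : ∀ f, 0 ≤ bγ f) (hbγper : Function.Periodic bγ 1)
    (A : ℤ → Matrix (Fin N) (Fin T) ℂ)
    (z : ℂ) (hz : 0 < z.im) (φ φt : ℝ → ℂ)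
    (hadm : IsAdmissible N T L σ2 bγ A z φ φt) :
    ∀ f ∈ Set.Icc (0:ℝ) 1,
      (φ f).im =
        (∫ u in (0:ℝ)..1,
          (K11 N T L σ2 bγ A φ φt z f u * (φ u).im
            + K12 N T L σ2 bγ A φ φt z f u * (z * φt u).im))
        + z.im * F1 N T L σ2 bγ A φ φt z f ∧
      (z * φt f).im =
        (∫ u in (0:ℝ)..1,
          (K21 N T L σ2 bγ A φ φt z f u * (φ u).im
            + K22 N T L σ2 bγ A φ φt z f u * (z * φt u).im))
        + z.im * F2 N T L σ2 bγ A φ φt z f :=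
  imaginary_parts_system_general N T L σ2 hσ bγ hbγc hbγnn A z hz φ φt hadm

end
end

section
/- For all f, f′ ∈ ℝ, the matrix-valued trigonometric polynomial satisfies ‖(𝐀𝐀*)(f) − (𝐀𝐀*)(f′)‖ ≤ 4π L a² |f − f′|, where ‖·‖ denotes the spectral norm. -/
open MeasureTheory Matrix

noncomputable section

open scoped Matrix.Norms.L2Operator

lemma expI_hasDeriv (x : ℝ) : HasDerivAt (fun x : ℝ => Complex.exp (x * Complex.I))
    (Complex.exp (x * Complex.I) * Complex.I) x := by
  have h := ((Complex.ofRealCLM.hasDerivAt (x := x)).mul_const Complex.I).cexp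
  simpa using h

lemma expI_lip : LipschitzWith 1 (fun x : ℝ => Complex.exp (x * Complex.I)) := by
  apply lipschitzWith_of_nnnorm_deriv_le
  · intro x; exact (expI_hasDeriv x).differentiableAt
  · intro x
    rw [(expI_hasDeriv x).deriv]
    simp [nnnorm_mul, ← NNReal.coe_le_coe, Complex.norm_exp_ofReal_mul_I]

lemma expI_sub (x y : ℝ) :
    ‖Complex.exp (x * Complex.I) - Complex.exp (y * Complex.I)‖ ≤ |x - y| := by
  have := expI_lip.dist_le_mul x y
  simpa [dist_eq_norm, Real.dist_eq] using this

lemma coeff_rw (k : ℤ) (f : ℝ) :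
    (2 : ℂ) * Real.pi * Complex.I * (k : ℂ) * (f : ℂ)
      = ((2 * Real.pi * k * f : ℝ) : ℂ) * Complex.I := by push_cast; ring

lemma specNorm_eq_norm {m n : Type*} [Fintype m] [Fintype n] [DecidableEq n]
    (M : Matrix m n ℂ) : specNorm M = ‖M‖ := rfl

lemma fA_norm_le (N T L : ℕ) (A : ℤ → Matrix (Fin N) (Fin T) ℂ) (f : ℝ) :
    ‖fA N T L A f‖ ≤ ∑ k ∈ Finset.Icc (-(L:ℤ)) (L:ℤ), ‖A k‖ := by
  refine (norm_sum_le _ _).trans (Finset.sum_le_sum fun k _ => ?_)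
  rw [norm_smul, coeff_rw, Complex.norm_exp_ofReal_mul_I, one_mul]

lemma fA_sub_norm_le (N T L : ℕ) (A : ℤ → Matrix (Fin N) (Fin T) ℂ) (f f' : ℝ) :
    ‖fA N T L A f - fA N T L A f'‖
      ≤ 2 * Real.pi * L * |f - f'| * ∑ k ∈ Finset.Icc (-(L:ℤ)) (L:ℤ), ‖A k‖ := by
  rw [fA, fA, ← Finset.sum_sub_distrib, Finset.mul_sum]
  refine (norm_sum_le _ _).trans (Finset.sum_le_sum fun k hk => ?_)
  rw [← sub_smul, norm_smul]
  have hk' : |(k : ℝ)| ≤ (L : ℝ) := by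
    rw [Finset.mem_Icc] at hk
    rw [← Int.cast_abs]
    exact_mod_cast abs_le.2 hk
  have hc : ‖Complex.exp (2 * Real.pi * Complex.I * (k : ℂ) * (f : ℂ))
      - Complex.exp (2 * Real.pi * Complex.I * (k : ℂ) * (f' : ℂ))‖
      ≤ 2 * Real.pi * L * |f - f'| := by
    rw [coeff_rw, coeff_rw]
    refine (expI_sub _ _).trans ?_
    have : 2 * Real.pi * (k:ℝ) * f - 2 * Real.pi * (k:ℝ) * f' = 2 * Real.pi * (k:ℝ) * (f - f') := by
      ring
    rw [this, abs_mul, abs_mul, abs_mul, abs_two, abs_of_nonneg Real.pi_pos.le]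
    have h1 : (0:ℝ) ≤ 2 * Real.pi := by positivity
    have := mul_le_mul_of_nonneg_right hk' (abs_nonneg (f - f'))
    nlinarith
  exact mul_le_mul_of_nonneg_right hc (norm_nonneg _)

theorem AAstar_lipschitz
    (N T L : ℕ) (hN : 0 < N) (hT : 0 < T) (hL : 0 < L)
    (A : ℤ → Matrix (Fin N) (Fin T) ℂ) :
    ∀ f f' : ℝ,
      specNorm (fA N T L A f * (fA N T L A f)ᴴ
          - fA N T L A f' * (fA N T L A f')ᴴ)
        ≤ 4 * Real.pi * (L : ℝ)
            * (∑ k ∈ Finset.Icc (-(L:ℤ)) (L:ℤ), specNorm (A k)) ^ 2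
            * |f - f'| := by
  intro f f'
  set X := fA N T L A f with hX
  set Y := fA N T L A f' with hY
  set a : ℝ := ∑ k ∈ Finset.Icc (-(L:ℤ)) (L:ℤ), specNorm (A k) with ha
  have ha' : a = ∑ k ∈ Finset.Icc (-(L:ℤ)) (L:ℤ), ‖A k‖ := rfl
  have ha0 : 0 ≤ a := by
    rw [ha']; exact Finset.sum_nonneg fun k _ => norm_nonneg _
  have hdecomp : X * Xᴴ - Y * Yᴴ = X * (X - Y)ᴴ + (X - Y) * Yᴴ := by
    rw [conjTranspose_sub, Matrix.mul_sub, Matrix.sub_mul]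
    abel
  rw [specNorm_eq_norm, hdecomp]
  have hXa : ‖X‖ ≤ a := by rw [ha']; exact fA_norm_le N T L A f
  have hYa : ‖Y‖ ≤ a := by rw [ha']; exact fA_norm_le N T L A f'
  have hdiff : ‖X - Y‖ ≤ 2 * Real.pi * L * |f - f'| * a := by
    rw [ha']; exact fA_sub_norm_le N T L A f f'
  have hd0 : 0 ≤ 2 * Real.pi * (L:ℝ) * |f - f'| := by positivity
  calc ‖X * (X - Y)ᴴ + (X - Y) * Yᴴ‖
      ≤ ‖X * (X - Y)ᴴ‖ + ‖(X - Y) * Yᴴ‖ := norm_add_le _ _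
    _ ≤ ‖X‖ * ‖(X - Y)ᴴ‖ + ‖X - Y‖ * ‖Yᴴ‖ :=
        add_le_add (Matrix.l2_opNorm_mul _ _) (Matrix.l2_opNorm_mul _ _)
    _ = ‖X‖ * ‖X - Y‖ + ‖X - Y‖ * ‖Y‖ := by
        rw [Matrix.l2_opNorm_conjTranspose, Matrix.l2_opNorm_conjTranspose]
    _ ≤ a * (2 * Real.pi * L * |f - f'| * a) + (2 * Real.pi * L * |f - f'| * a) * a := by
        have h1 := mul_le_mul hXa hdiff (norm_nonneg _) ha0
        have h2 := mul_le_mul hdiff hYa (norm_nonneg _) (by positivity)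
        linarith
    _ = 4 * Real.pi * (L:ℝ) * a ^ 2 * |f - f'| := by ring

end
end
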